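/- Let ω^(a), ω^(b) be strictly positive probability vectors on B buckets obtained by pushing forward strictly positive probability vectors π^(a), π^(b) on p classes under a map f. If there exist classes i ≠ j with f(i) = f(j) and π^(a)_i · π^(b)_j ≠ π^(a)_j · π^(b)_i, then D_KL(ω^(a) ∥ ω^(b)) < D_KL(π^(a) ∥ π^(b)) with strict inequality. -/
import Mathlib

noncomputable def klDiv {α : Type*} [Fintype α] (a b : α → ℝ) : ℝ :=
  ∑ i, a i * Real.log (a i / b i)

def pushforward {α β : Type*} [Fintype α] [DecidableEq β] (f : α → β) (a : α → ℝ) :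
    β → ℝ :=
  fun b => ∑ i ∈ Finset.univ.filter (fun i => f i = b), a i

section aux

open Real Finset

variable {α : Type*} (s : Finset α) (a b : α → ℝ)

/-- Reduce the log-sum inequality to Jensen's inequality for `x ↦ x * log x`. -/
private lemma logsum_algebra (ha : ∀ i ∈ s, 0 < a i) (hb : ∀ i ∈ s, 0 < b i)
    (hs : s.Nonempty) :
    (∑ i ∈ s, b i / (∑ j ∈ s, b j)) = 1 ∧
    (∑ i ∈ s, (b i / (∑ j ∈ s, b j)) • (a i / b i)) = (∑ i ∈ s, a i) / (∑ j ∈ s, b j) ∧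
    (∑ i ∈ s, (b i / (∑ j ∈ s, b j)) • ((a i / b i) * Real.log (a i / b i)))
      = (∑ i ∈ s, a i * Real.log (a i / b i)) / (∑ j ∈ s, b j) := by
  have hB : 0 < ∑ j ∈ s, b j := Finset.sum_pos hb hs
  refine ⟨by rw [← Finset.sum_div]; field_simp, ?_, ?_⟩
  · rw [Finset.sum_div]
    refine Finset.sum_congr rfl fun i hi => ?_
    have := (hb i hi).ne'
    simp only [smul_eq_mul]
    field_simp
  · rw [Finset.sum_div]
    refine Finset.sum_congr rfl fun i hi => ?_
    have := (hb i hi).ne'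
    simp only [smul_eq_mul]
    field_simp

private lemma bucket_le (ha : ∀ i ∈ s, 0 < a i) (hb : ∀ i ∈ s, 0 < b i)
    (hs : s.Nonempty) :
    (∑ i ∈ s, a i) * Real.log ((∑ i ∈ s, a i) / (∑ i ∈ s, b i)) ≤
      ∑ i ∈ s, a i * Real.log (a i / b i) := by
  have hB : 0 < ∑ j ∈ s, b j := Finset.sum_pos hb hs
  obtain ⟨hw, hx, hy⟩ := logsum_algebra s a b ha hb hs
  have jensen := Real.convexOn_mul_log.map_sum_le
    (w := fun i => b i / (∑ j ∈ s, b j)) (p := fun i => a i / b i) (t := s)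
    (fun i hi => (div_pos (hb i hi) hB).le) hw
    (fun i hi => (div_pos (ha i hi) (hb i hi)).le)
  rw [hx, hy] at jensen
  have h := mul_le_mul_of_nonneg_right jensen hB.le
  calc (∑ i ∈ s, a i) * Real.log ((∑ i ∈ s, a i) / (∑ i ∈ s, b i))
      = ((∑ i ∈ s, a i) / (∑ j ∈ s, b j) * Real.log ((∑ i ∈ s, a i) / (∑ j ∈ s, b j)))
        * (∑ j ∈ s, b j) := by field_simp
    _ ≤ ((∑ i ∈ s, a i * Real.log (a i / b i)) / (∑ j ∈ s, b j)) * (∑ j ∈ s, b j) := h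
    _ = ∑ i ∈ s, a i * Real.log (a i / b i) := by field_simp

private lemma bucket_lt (ha : ∀ i ∈ s, 0 < a i) (hb : ∀ i ∈ s, 0 < b i)
    (hne : ∃ i ∈ s, ∃ j ∈ s, a i * b j ≠ a j * b i) :
    (∑ i ∈ s, a i) * Real.log ((∑ i ∈ s, a i) / (∑ i ∈ s, b i)) <
      ∑ i ∈ s, a i * Real.log (a i / b i) := by
  have hs : s.Nonempty := by obtain ⟨i, hi, -⟩ := hne; exact ⟨i, hi⟩
  have hB : 0 < ∑ j ∈ s, b j := Finset.sum_pos hb hs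
  obtain ⟨hw, hx, hy⟩ := logsum_algebra s a b ha hb hs
  have jensen := Real.strictConvexOn_mul_log.map_sum_lt
    (w := fun i => b i / (∑ j ∈ s, b j)) (p := fun i => a i / b i) (t := s)
    (fun i hi => div_pos (hb i hi) hB) hw
    (fun i hi => (div_pos (ha i hi) (hb i hi)).le)
    (by
      obtain ⟨i, hi, j, hj, hij⟩ := hne
      refine ⟨i, hi, j, hj, fun h => hij ?_⟩
      rw [div_eq_div_iff (hb i hi).ne' (hb j hj).ne'] at h
      linarith)
  rw [hx, hy] at jensen
  have h := mul_lt_mul_of_pos_right jensen hB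
  calc (∑ i ∈ s, a i) * Real.log ((∑ i ∈ s, a i) / (∑ i ∈ s, b i))
      = ((∑ i ∈ s, a i) / (∑ j ∈ s, b j) * Real.log ((∑ i ∈ s, a i) / (∑ j ∈ s, b j)))
        * (∑ j ∈ s, b j) := by field_simp
    _ < ((∑ i ∈ s, a i * Real.log (a i / b i)) / (∑ j ∈ s, b j)) * (∑ j ∈ s, b j) := h
    _ = ∑ i ∈ s, a i * Real.log (a i / b i) := by field_simp

end aux

/-- strict data-processing inequality. If two classes `i ≠ j` with
different likelihood ratios (`π^a_i · π^b_j ≠ π^a_j · π^b_i`) are merged by `f`,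
then `D_KL(ω^a ∥ ω^b) < D_KL(π^a ∥ π^b)` strictly. -/
theorem stmt15 (p B : ℕ) (πa πb : Fin p → ℝ)
    (hπa : ∀ i, 0 < πa i) (hπb : ∀ i, 0 < πb i)
    (hsa : ∑ i, πa i = 1) (hsb : ∑ i, πb i = 1)
    (f : Fin p → Fin B) (hf : Function.Surjective f)
    (hstrict : ∃ i j : Fin p, i ≠ j ∧ f i = f j ∧ πa i * πb j ≠ πa j * πb i) :
    klDiv (pushforward f πa) (pushforward f πb) < klDiv πa πb := by
  classical
  obtain ⟨i0, j0, hij0, hfij, hratio⟩ := hstrict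
  have hrhs : klDiv πa πb
      = ∑ c : Fin B, ∑ i ∈ Finset.univ.filter (fun i => f i = c),
          πa i * Real.log (πa i / πb i) := by
    rw [klDiv, Finset.sum_fiberwise]
  rw [hrhs, klDiv]
  refine Finset.sum_lt_sum (fun c _ => ?_) ⟨f i0, Finset.mem_univ _, ?_⟩
  · obtain ⟨i, hi⟩ := hf c
    exact bucket_le _ πa πb (fun i _ => hπa i) (fun i _ => hπb i)
      ⟨i, by simp [hi]⟩
  · exact bucket_lt _ πa πb (fun i _ => hπa i) (fun i _ => hπb i)
      ⟨i0, by simp, j0, by simp [hfij], hratio⟩
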